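/- arXiv:1606.01104 — 7 statements merged into one kernel-verified Lean document; each statement's English description precedes it below -/
import Mathlib

section
/- Let T be a nonempty finite set, let w : T × T → ℝ be symmetric (w K L = w L K) with nonnegative entries, let w^b : T → ℝ be nonnegative, let h : T → ℝ, and let φ : ℝ → ℝ be a differentiable convex function with φ'(1) = 0. Then the discrete physical dissipation satisfies the summation-by-parts identity −Σ_{K∈T} φ'(h K)·( Σ_{L∈T} w K L·(h L − h K) + w^b K·(1 − h K) ) = (1/2)·Σ_{K∈T} Σ_{L∈T} w K L·(h L − h K)·(φ'(h L) − φ'(h K)) + Σ_{K∈T} w^b K·(1 − h K)·(φ'(1) − φ'(h K)), and in particular this quantity is nonnegative. -/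
open Finset

theorem stmt_0 {T : Type*} [Fintype T] [Nonempty T]
    (w : T → T → ℝ) (hw_symm : ∀ K L, w K L = w L K)
    (hw_nonneg : ∀ K L, 0 ≤ w K L)
    (wb : T → ℝ) (hwb_nonneg : ∀ K, 0 ≤ wb K)
    (h : T → ℝ) (φ : ℝ → ℝ)
    (hφ_diff : Differentiable ℝ φ)
    (hφ_conv : ConvexOn ℝ Set.univ φ)
    (hφ'1 : deriv φ 1 = 0) :
    (-∑ K, deriv φ (h K) *
        ((∑ L, w K L * (h L - h K)) + wb K * (1 - h K)) =
      (1/2) * (∑ K, ∑ L, w K L * (h L - h K) * (deriv φ (h L) - deriv φ (h K)))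
        + ∑ K, wb K * (1 - h K) * (deriv φ 1 - deriv φ (h K)))
    ∧ 0 ≤ -∑ K, deriv φ (h K) *
        ((∑ L, w K L * (h L - h K)) + wb K * (1 - h K)) := by
  have hmono : Monotone (deriv φ) := by
    have := hφ_conv.monotoneOn_deriv (fun x _ => hφ_diff.differentiableAt)
    intro a b hab
    exact this (Set.mem_univ a) (Set.mem_univ b) hab
  have hkey : ∀ a b : ℝ, 0 ≤ (b - a) * (deriv φ b - deriv φ a) := by
    intro a b
    rcases le_total a b with hab | hab
    · exact mul_nonneg (by linarith) (by linarith [hmono hab])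
    · nlinarith [hmono hab]
  have hid : -∑ K, deriv φ (h K) *
        ((∑ L, w K L * (h L - h K)) + wb K * (1 - h K)) =
      (1/2) * (∑ K, ∑ L, w K L * (h L - h K) * (deriv φ (h L) - deriv φ (h K)))
        + ∑ K, wb K * (1 - h K) * (deriv φ 1 - deriv φ (h K)) := by
    have hswap : ∑ K, ∑ L, w K L * (h L - h K) * deriv φ (h L)
        = -∑ K, ∑ L, w K L * (h L - h K) * deriv φ (h K) := by
      rw [Finset.sum_comm]
      rw [← Finset.sum_neg_distrib]
      refine Finset.sum_congr rfl fun L _ => ?_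
      rw [← Finset.sum_neg_distrib]
      refine Finset.sum_congr rfl fun K _ => ?_
      rw [hw_symm K L]; ring
    have e1 : ∑ K, ∑ L, w K L * (h L - h K) * (deriv φ (h L) - deriv φ (h K))
        = ∑ K, ∑ L, w K L * (h L - h K) * deriv φ (h L)
          - ∑ K, ∑ L, w K L * (h L - h K) * deriv φ (h K) := by
      rw [← Finset.sum_sub_distrib]
      refine Finset.sum_congr rfl fun K _ => ?_
      rw [← Finset.sum_sub_distrib]
      exact Finset.sum_congr rfl fun L _ => by ring
    have e2 : ∑ K, deriv φ (h K) *
        ((∑ L, w K L * (h L - h K)) + wb K * (1 - h K))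
        = (∑ K, ∑ L, w K L * (h L - h K) * deriv φ (h K))
          + ∑ K, wb K * (1 - h K) * deriv φ (h K) := by
      rw [← Finset.sum_add_distrib]
      refine Finset.sum_congr rfl fun K _ => ?_
      rw [mul_add, Finset.mul_sum]
      congr 1
      · exact Finset.sum_congr rfl fun L _ => by ring
      · ring
    rw [e1, e2, hswap, hφ'1]
    have : ∑ K, wb K * (1 - h K) * (0 - deriv φ (h K))
        = -∑ K, wb K * (1 - h K) * deriv φ (h K) := by
      rw [← Finset.sum_neg_distrib]
      exact Finset.sum_congr rfl fun K _ => by ring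
    rw [this]; ring
  refine ⟨hid, ?_⟩
  rw [hid]
  have h1 : 0 ≤ ∑ K, ∑ L, w K L * (h L - h K) * (deriv φ (h L) - deriv φ (h K)) :=
    Finset.sum_nonneg fun K _ => Finset.sum_nonneg fun L _ => by
      rw [mul_assoc]; exact mul_nonneg (hw_nonneg K L) (hkey (h K) (h L))
  have h2 : 0 ≤ ∑ K, wb K * (1 - h K) * (deriv φ 1 - deriv φ (h K)) :=
    Finset.sum_nonneg fun K _ => by
      rw [mul_assoc]; exact mul_nonneg (hwb_nonneg K) (hkey (h K) 1)
  positivity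
end

section
/- Let T be a nonempty finite set, let U : T × T → ℝ be antisymmetric (U K L = −(U L K)) and b : T → ℝ satisfy the discrete divergence-free condition Σ_{L∈T} U K L + b K = 0 for every K ∈ T. Let g : ℝ × ℝ → ℝ be nondecreasing in its first argument, nonincreasing in its second argument, and satisfy g(s,s) = s for all s ∈ ℝ. Let φ : ℝ → ℝ be a twice continuously differentiable strictly convex function with φ(1) = 0 and φ'(1) = 0. Then for every h : T → ℝ, the discrete numerical dissipation C_φ(h) = Σ_{K∈T} φ'(h K)·( Σ_{L∈T} ( (U K L)⁺·g(h K, h L) − (U K L)⁻·g(h L, h K) ) + (b K)⁺·g(h K, 1) − (b K)⁻·g(1, h K) ) is nonnegative, where x⁺ = max(x,0) and x⁻ = max(−x,0). -/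
open Finset

private lemma grad_ineq {φ : ℝ → ℝ} (hφ : ContDiff ℝ 2 φ)
    (hφconv : StrictConvexOn ℝ Set.univ φ) (x y : ℝ) :
    φ x + deriv φ x * (y - x) ≤ φ y := by
  have hd : ∀ z : ℝ, DifferentiableAt ℝ φ z := fun z =>
    (hφ.differentiable (by norm_num)).differentiableAt
  have hc := hφconv.convexOn
  rcases lt_trichotomy x y with hxy | rfl | hxy
  · have hs := hc.deriv_le_slope (Set.mem_univ x) (Set.mem_univ y) hxy (hd x)
    rw [slope_def_field] at hs
    have hyx : (0:ℝ) < y - x := by linarith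
    rw [le_div_iff₀ hyx] at hs
    linarith
  · simp
  · have hs := hc.slope_le_deriv (Set.mem_univ y) (Set.mem_univ x) hxy (hd x)
    rw [slope_def_field] at hs
    have hyx : (0:ℝ) < x - y := by linarith
    rw [div_le_iff₀ hyx] at hs
    nlinarith

private lemma key_ineq {g : ℝ → ℝ → ℝ}
    (hg2 : ∀ s : ℝ, Antitone (g s))
    (hgss : ∀ s : ℝ, g s s = s)
    {φ : ℝ → ℝ} (hφ : ContDiff ℝ 2 φ)
    (hφconv : StrictConvexOn ℝ Set.univ φ) (a c : ℝ) :
    φ c - φ a ≤ deriv φ a * (g a c - a) - deriv φ c * (g a c - c) := by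
  have hd : ∀ z : ℝ, DifferentiableAt ℝ φ z := fun z =>
    (hφ.differentiable (by norm_num)).differentiableAt
  have hmono : Monotone (deriv φ) := fun x y hxy =>
    hφconv.convexOn.monotoneOn_deriv (fun z _ => hd z) (Set.mem_univ x) (Set.mem_univ y) hxy
  have hgrad : φ c + deriv φ c * (a - c) ≤ φ a := grad_ineq hφ hφconv c a
  have hsign : 0 ≤ (deriv φ a - deriv φ c) * (g a c - a) := by
    rcases le_total a c with hac | hac
    · have h1 : deriv φ a ≤ deriv φ c := hmono hac
      have h2 : g a c ≤ a := by have := hg2 a hac; rwa [hgss a] at this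
      nlinarith
    · have h1 : deriv φ c ≤ deriv φ a := hmono hac
      have h2 : a ≤ g a c := by have := hg2 a hac; rwa [hgss a] at this
      nlinarith
  nlinarith

theorem stmt_1 {T : Type*} [Fintype T] [Nonempty T]
    (U : T → T → ℝ) (hU : ∀ K L, U K L = -(U L K))
    (b : T → ℝ) (hdiv : ∀ K, (∑ L, U K L) + b K = 0)
    (g : ℝ → ℝ → ℝ)
    (hg1 : ∀ t : ℝ, Monotone (fun s => g s t))
    (hg2 : ∀ s : ℝ, Antitone (g s))
    (hgss : ∀ s : ℝ, g s s = s)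
    (φ : ℝ → ℝ) (hφ : ContDiff ℝ 2 φ)
    (hφconv : StrictConvexOn ℝ Set.univ φ)
    (hφ1 : φ 1 = 0) (hφ'1 : deriv φ 1 = 0)
    (h : T → ℝ) :
    0 ≤ ∑ K, deriv φ (h K) *
        ((∑ L, (max (U K L) 0 * g (h K) (h L) - max (-(U K L)) 0 * g (h L) (h K)))
          + max (b K) 0 * g (h K) 1 - max (-(b K)) 0 * g 1 (h K)) := by
  classical
  set p : ℝ → ℝ := deriv φ with hp
  set A : T → T → ℝ := fun K L => max (U K L) 0 with hA
  set D : ℝ → ℝ → ℝ := fun a c => p a * (g a c - a) - p c * (g a c - c) with hD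
  set c : T → ℝ := fun K => p (h K) * h K - φ (h K) with hc
  set X : T → T → ℝ := fun K L => p (h K) * A K L * g (h K) (h L) with hX
  set W : T → T → ℝ := fun K L => p (h L) * A K L * g (h K) (h L) with hW
  set Y : T → ℝ := fun K => p (h K) * max (b K) 0 * g (h K) 1
      - p (h K) * max (-(b K)) 0 * g 1 (h K) with hY
  have hU' : ∀ K L, max (-(U K L)) 0 = max (U L K) 0 := by
    intro K L; rw [hU K L, neg_neg]
  have hUval : ∀ K L, U K L = A K L - A L K := by
    intro K L
    simp only [hA, ← hU' K L, max_zero_sub_max_neg_zero_eq_self]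
  have hbval : ∀ K, max (b K) 0 - max (-(b K)) 0 = b K := fun K =>
    max_zero_sub_max_neg_zero_eq_self (b K)
  -- the original sum in separated form
  have LHS_eq : (∑ K, p (h K) *
        ((∑ L, (max (U K L) 0 * g (h K) (h L) - max (-(U K L)) 0 * g (h L) (h K)))
          + max (b K) 0 * g (h K) 1 - max (-(b K)) 0 * g 1 (h K)))
      = ((∑ K, ∑ L, X K L) - (∑ K, ∑ L, W K L)) + ∑ K, Y K := by
    have swapW : (∑ K, ∑ L, (fun K L => W L K) K L) = ∑ K, ∑ L, W K L :=
      Finset.sum_comm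
    calc (∑ K, p (h K) *
        ((∑ L, (max (U K L) 0 * g (h K) (h L) - max (-(U K L)) 0 * g (h L) (h K)))
          + max (b K) 0 * g (h K) 1 - max (-(b K)) 0 * g 1 (h K)))
        = ∑ K, ((∑ L, (X K L - W L K)) + Y K) := by
          refine Finset.sum_congr rfl fun K _ => ?_
          rw [mul_sub, mul_add, Finset.mul_sum]
          have : (∑ L, p (h K) * (max (U K L) 0 * g (h K) (h L)
              - max (-(U K L)) 0 * g (h L) (h K))) = ∑ L, (X K L - W L K) := by
            refine Finset.sum_congr rfl fun L _ => ?_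
            rw [hU' K L]
            simp only [hX, hW, hA]
            ring
          rw [this]
          simp only [hY]
          ring
      _ = (∑ K, ∑ L, (X K L - W L K)) + ∑ K, Y K := Finset.sum_add_distrib
      _ = ((∑ K, ∑ L, X K L) - (∑ K, ∑ L, (fun K L => W L K) K L)) + ∑ K, Y K := by
          rw [← Finset.sum_sub_distrib]
          congr 1
          exact Finset.sum_congr rfl fun K _ => Finset.sum_sub_distrib _ _
      _ = ((∑ K, ∑ L, X K L) - (∑ K, ∑ L, W K L)) + ∑ K, Y K := by rw [swapW]
  -- the nonnegative form in separated form
  have RHS_eq : ((∑ K, ∑ L, A K L * (D (h K) (h L) - (φ (h L) - φ (h K))))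
        + ∑ K, (max (b K) 0 * (D (h K) 1 - (φ 1 - φ (h K)))
                + max (-(b K)) 0 * (D 1 (h K) - (φ (h K) - φ 1))))
      = ((∑ K, ∑ L, X K L) - (∑ K, ∑ L, W K L)) + ∑ K, Y K
        - ∑ K, c K * ((∑ L, U K L) + b K) := by
    have swapC : (∑ K, ∑ L, (fun K L => c L * A K L) K L) = ∑ K, ∑ L, c K * A L K :=
      Finset.sum_comm
    have inner : ∀ K, (∑ L, A K L * (D (h K) (h L) - (φ (h L) - φ (h K))))
        = (∑ L, (X K L - W K L - c K * A K L + c L * A K L)) := by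
      refine fun K => Finset.sum_congr rfl fun L _ => ?_
      simp only [hD, hX, hW, hc]
      ring
    have bdry : ∀ K, max (b K) 0 * (D (h K) 1 - (φ 1 - φ (h K)))
        + max (-(b K)) 0 * (D 1 (h K) - (φ (h K) - φ 1))
        = Y K - c K * b K := by
      intro K
      simp only [hD, hY, hc, hφ'1, hφ1]
      linear_combination (φ (h K) - p (h K) * h K) * hbval K
    calc ((∑ K, ∑ L, A K L * (D (h K) (h L) - (φ (h L) - φ (h K))))
        + ∑ K, (max (b K) 0 * (D (h K) 1 - (φ 1 - φ (h K)))
                + max (-(b K)) 0 * (D 1 (h K) - (φ (h K) - φ 1))))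
        = (∑ K, ∑ L, (X K L - W K L - c K * A K L + c L * A K L))
          + ∑ K, (Y K - c K * b K) := by
          congr 1
          · exact Finset.sum_congr rfl fun K _ => inner K
          · exact Finset.sum_congr rfl fun K _ => bdry K
      _ = ((∑ K, ∑ L, (X K L - W K L - c K * A K L)) + ∑ K, ∑ L, c L * A K L)
          + ((∑ K, Y K) - ∑ K, c K * b K) := by
          rw [Finset.sum_sub_distrib]
          congr 1
          rw [← Finset.sum_add_distrib]
          refine Finset.sum_congr rfl fun K _ => ?_
          rw [← Finset.sum_add_distrib]
      _ = ((∑ K, ∑ L, (X K L - W K L - c K * A K L)) + ∑ K, ∑ L, c K * A L K)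
          + ((∑ K, Y K) - ∑ K, c K * b K) := by rw [← swapC]
      _ = (∑ K, ∑ L, (X K L - W K L - c K * A K L + c K * A L K))
          + ((∑ K, Y K) - ∑ K, c K * b K) := by
          congr 1
          rw [← Finset.sum_add_distrib]
          refine Finset.sum_congr rfl fun K _ => ?_
          rw [← Finset.sum_add_distrib]
      _ = (∑ K, ((∑ L, (X K L - W K L)) - c K * ∑ L, U K L))
          + ((∑ K, Y K) - ∑ K, c K * b K) := by
          congr 1
          refine Finset.sum_congr rfl fun K _ => ?_
          rw [Finset.mul_sum, ← Finset.sum_sub_distrib]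
          refine Finset.sum_congr rfl fun L _ => ?_
          rw [hUval K L]
          ring
      _ = ((∑ K, ∑ L, (X K L - W K L)) - ∑ K, c K * ∑ L, U K L)
          + ((∑ K, Y K) - ∑ K, c K * b K) := by rw [Finset.sum_sub_distrib]
      _ = ((∑ K, ∑ L, X K L) - (∑ K, ∑ L, W K L)) + ∑ K, Y K
          - ∑ K, c K * ((∑ L, U K L) + b K) := by
          have e1 : (∑ K, ∑ L, (X K L - W K L))
              = (∑ K, ∑ L, X K L) - (∑ K, ∑ L, W K L) := by
            rw [← Finset.sum_sub_distrib]
            exact Finset.sum_congr rfl fun K _ => Finset.sum_sub_distrib _ _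
          have e2 : (∑ K, c K * ((∑ L, U K L) + b K))
              = (∑ K, c K * ∑ L, U K L) + ∑ K, c K * b K := by
            rw [← Finset.sum_add_distrib]
            exact Finset.sum_congr rfl fun K _ => mul_add _ _ _
          rw [e1, e2]
          ring
  have hzero : (∑ K, c K * ((∑ L, U K L) + b K)) = 0 :=
    Finset.sum_eq_zero fun K _ => by rw [hdiv K, mul_zero]
  have key : ∀ a d : ℝ, 0 ≤ D a d - (φ d - φ a) := by
    intro a d
    have := key_ineq hg2 hgss hφ hφconv a d
    simp only [hD, hp]
    linarith
  have nonneg1 : 0 ≤ ∑ K, ∑ L, A K L * (D (h K) (h L) - (φ (h L) - φ (h K))) :=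
    Finset.sum_nonneg fun K _ => Finset.sum_nonneg fun L _ =>
      mul_nonneg (le_max_right _ _) (key (h K) (h L))
  have nonneg2 : 0 ≤ ∑ K, (max (b K) 0 * (D (h K) 1 - (φ 1 - φ (h K)))
                + max (-(b K)) 0 * (D 1 (h K) - (φ (h K) - φ 1))) := by
    refine Finset.sum_nonneg fun K _ => add_nonneg ?_ ?_
    · exact mul_nonneg (le_max_right _ _) (key (h K) 1)
    · exact mul_nonneg (le_max_right _ _) (key 1 (h K))
  have := RHS_eq
  rw [hzero, sub_zero] at this
  rw [LHS_eq, ← this]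
  linarith
end

section
/- Let T be a nonempty finite set, let U : T × T → ℝ be antisymmetric (U K L = −(U L K)) and b : T → ℝ satisfy Σ_{L∈T} U K L + b K = 0 for every K ∈ T. Let φ : ℝ → ℝ be a continuously differentiable strictly convex function with φ(1) = 0 and φ'(1) = 0, set varphi(s) = s·φ'(s) − φ(s), and define the φ-mean M_φ(s,t) = (varphi(s) − varphi(t))/(φ'(s) − φ'(t)) for s ≠ t and M_φ(s,s) = s. Then for every h : T → ℝ, Σ_{K∈T} φ'(h K)·( Σ_{L∈T} U K L·M_φ(h K, h L) + b K·M_φ(h K, 1) ) = 0. -/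
open Finset

theorem stmt_2 {T : Type*} [Fintype T] [Nonempty T]
    (U : T → T → ℝ) (hU : ∀ K L, U K L = -(U L K))
    (b : T → ℝ) (hdiv : ∀ K, (∑ L, U K L) + b K = 0)
    (φ : ℝ → ℝ) (hφ : ContDiff ℝ 1 φ)
    (hφconv : StrictConvexOn ℝ Set.univ φ)
    (hφ1 : φ 1 = 0) (hφ'1 : deriv φ 1 = 0)
    (varphi : ℝ → ℝ) (hvarphi : ∀ s, varphi s = s * deriv φ s - φ s)
    (Mφ : ℝ → ℝ → ℝ)
    (hM : ∀ s t : ℝ, s ≠ t → Mφ s t = (varphi s - varphi t) / (deriv φ s - deriv φ t))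
    (hMdiag : ∀ s : ℝ, Mφ s s = s)
    (h : T → ℝ) :
    ∑ K, deriv φ (h K) * ((∑ L, U K L * Mφ (h K) (h L)) + b K * Mφ (h K) 1) = 0 := by
  have hd : ∀ x : ℝ, DifferentiableAt ℝ φ x := fun x =>
    (hφ.differentiable one_ne_zero).differentiableAt
  have hmono : StrictMono (deriv φ) := by
    have := hφconv.strictMonoOn_deriv (fun x _ => hd x)
    intro x y hxy
    exact this (Set.mem_univ x) (Set.mem_univ y) hxy
  have hinj : ∀ s t : ℝ, s ≠ t → deriv φ s ≠ deriv φ t := fun s t hst =>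
    fun hh => hst (hmono.injective hh)
  -- key identity: deriv φ s * Mφ s t - varphi s is symmetric
  have hMsymm : ∀ s t : ℝ, Mφ s t = Mφ t s := by
    intro s t
    rcases eq_or_ne s t with rfl | hst
    · rfl
    · rw [hM s t hst, hM t s hst.symm, ← neg_div_neg_eq]
      ring_nf
  have key : ∀ s t : ℝ,
      deriv φ s * Mφ s t - varphi s = deriv φ t * Mφ t s - varphi t := by
    intro s t
    rcases eq_or_ne s t with rfl | hst
    · rfl
    · have hne := hinj s t hst
      rw [hMsymm t s, hM s t hst]
      have : (deriv φ s - deriv φ t) * ((varphi s - varphi t) / (deriv φ s - deriv φ t))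
          = varphi s - varphi t := by
        field_simp [sub_ne_zero.mpr hne]
      nlinarith [this]
  have hvarphi1 : varphi 1 = 0 := by rw [hvarphi]; rw [hφ'1, hφ1]; ring
  -- boundary term
  have hbd : ∀ s : ℝ, deriv φ s * Mφ s 1 = varphi s := by
    intro s
    have := key s 1
    rw [hφ'1, hvarphi1] at this
    linarith [this]
  have expand : ∀ K, deriv φ (h K) * ((∑ L, U K L * Mφ (h K) (h L)) + b K * Mφ (h K) 1)
      = (∑ L, U K L * ((deriv φ (h K) * Mφ (h K) (h L) - varphi (h K)) + varphi (h K)))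
        + b K * varphi (h K) := by
    intro K
    rw [mul_add, Finset.mul_sum]
    congr 1
    · exact Finset.sum_congr rfl fun L _ => by ring
    · rw [← hbd (h K)]; ring
  rw [Finset.sum_congr rfl fun K _ => expand K]
  have split : ∀ K, (∑ L, U K L * ((deriv φ (h K) * Mφ (h K) (h L) - varphi (h K)) + varphi (h K)))
      = (∑ L, U K L * (deriv φ (h K) * Mφ (h K) (h L) - varphi (h K)))
        + (∑ L, U K L) * varphi (h K) := by
    intro K
    rw [Finset.sum_mul]
    rw [← Finset.sum_add_distrib]
    exact Finset.sum_congr rfl fun L _ => by ring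
  rw [Finset.sum_congr rfl fun K _ => by rw [split K]]
  have hF0 : ∑ K, ∑ L, U K L * (deriv φ (h K) * Mφ (h K) (h L) - varphi (h K)) = 0 := by
    have hswap : ∑ K, ∑ L, U K L * (deriv φ (h K) * Mφ (h K) (h L) - varphi (h K))
        = ∑ K, ∑ L, U L K * (deriv φ (h L) * Mφ (h L) (h K) - varphi (h L)) :=
      Finset.sum_comm
    have hneg : ∀ K L, U L K * (deriv φ (h L) * Mφ (h L) (h K) - varphi (h L))
        = -(U K L * (deriv φ (h K) * Mφ (h K) (h L) - varphi (h K))) := by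
      intro K L
      rw [hU L K, key (h L) (h K)]
      ring
    have hz : ∑ K, ∑ L, (U K L * (deriv φ (h K) * Mφ (h K) (h L) - varphi (h K))
        + U L K * (deriv φ (h L) * Mφ (h L) (h K) - varphi (h L))) = 0 := by
      refine Finset.sum_eq_zero fun K _ => Finset.sum_eq_zero fun L _ => ?_
      rw [hneg K L]; ring
    simp_rw [Finset.sum_add_distrib] at hz
    rw [← hswap] at hz
    linarith
  have : ∑ K, ((∑ L, U K L * (deriv φ (h K) * Mφ (h K) (h L) - varphi (h K)))
      + (∑ L, U K L) * varphi (h K) + b K * varphi (h K))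
      = (∑ K, ∑ L, U K L * (deriv φ (h K) * Mφ (h K) (h L) - varphi (h K)))
        + ∑ K, ((∑ L, U K L) + b K) * varphi (h K) := by
    rw [← Finset.sum_add_distrib]
    exact Finset.sum_congr rfl fun K _ => by ring
  rw [this, hF0]
  simp [hdiv]
end

section
/- Let J ⊆ ℝ be an interval and let φ : J → ℝ be twice continuously differentiable and strictly convex. Set varphi(s) = s·φ'(s) − φ(s). Then for all s, t ∈ J with s < t one has φ'(s) < φ'(t), and the φ-mean M_φ(s,t) = (varphi(t) − varphi(s))/(φ'(t) − φ'(s)) satisfies s ≤ M_φ(s,t) ≤ t. -/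
theorem stmt_3 (J : Set ℝ) (hJ : Convex ℝ J)
    (φ φ' φ'' : ℝ → ℝ)
    (hd1 : ∀ x ∈ J, HasDerivAt φ (φ' x) x)
    (hd2 : ∀ x ∈ J, HasDerivAt φ' (φ'' x) x)
    (hcont : ContinuousOn φ'' J)
    (hconv : StrictConvexOn ℝ J φ) :
    ∀ s ∈ J, ∀ t ∈ J, s < t →
      φ' s < φ' t ∧
      s ≤ ((t * φ' t - φ t) - (s * φ' s - φ s)) / (φ' t - φ' s) ∧
      ((t * φ' t - φ t) - (s * φ' s - φ s)) / (φ' t - φ' s) ≤ t := by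
  intro s hs t ht hst
  have h1 : φ' s < slope φ s t := hconv.lt_slope_of_hasDerivAt hs ht hst (hd1 s hs)
  have h2 : slope φ s t < φ' t := hconv.slope_lt_of_hasDerivAt hs ht hst (hd1 t ht)
  rw [slope_def_field] at h1 h2
  have hts : (0:ℝ) < t - s := by linarith
  have k1 : φ' s * (t - s) < φ t - φ s := by
    have := (lt_div_iff₀ hts).mp h1; linarith
  have k2 : φ t - φ s < φ' t * (t - s) := by
    have := (div_lt_iff₀ hts).mp h2; linarith
  have hΔ : φ' s < φ' t := by nlinarith
  have hΔ' : (0:ℝ) < φ' t - φ' s := by linarith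
  refine ⟨hΔ, ?_, ?_⟩
  · rw [le_div_iff₀ hΔ']; nlinarith
  · rw [div_le_iff₀ hΔ']; nlinarith
end

section
/- Let T be a nonempty finite set, m : T → (0,∞), Δt > 0; let U : T × T → ℝ be antisymmetric and b : T → ℝ satisfy Σ_{L∈T} U K L + b K = 0 for every K; let w : T × T → ℝ be symmetric with nonnegative entries and w^b : T → ℝ be nonnegative; let η : ℝ → ℝ be a continuous, strictly increasing bijection of ℝ with η(0) = 0; let c : T → ℝ satisfy c K > 0 for all K, and set f∞ K = η⁻¹(c K); let g : ℝ × ℝ → ℝ be nondecreasing in its first argument, nonincreasing in its second argument, with g(s,s) = s; and let φ : ℝ → ℝ be twice continuously differentiable, strictly convex, with φ(1) = 0 and φ'(1) = 0. For u : T → ℝ write h[u] K = η(u K)/c K, define the total flux G K(h) = Σ_{L∈T} ( (U K L)⁺·g(h K, h L) − (U K L)⁻·g(h L, h K) ) + (b K)⁺·g(h K, 1) − (b K)⁻·g(1, h K) − Σ_{L∈T} w K L·(h L − h K) − w^b K·(1 − h K), the discrete relative entropy H_φ(u) = Σ_{K∈T} m K · ∫_{f∞ K}^{u K} φ'(η(s)/c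 K) ds, and the dissipation D_φ(h) = −Σ_{K∈T} φ'(h K)·( Σ_{L∈T} w K L·(h L − h K) + w^b K·(1 − h K) ). Suppose f, f' : T → ℝ satisfy the implicit scheme m K·(f' K − f K)/Δt + G K(h[f']) = 0 for every K ∈ T. Then D_φ(h[f']) ≥ 0 and H_φ(f') − H_φ(f) ≤ −Δt·D_φ(h[f']). -/
open Finset

/-- Total discrete flux (upwind convection + two-point diffusion) through the
boundary of cell `K`, acting on the ratio unknown `h` (boundary value `1`). -/
noncomputable def totalFlux {T : Type*} [Fintype T] (U : T → T → ℝ) (b : T → ℝ)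
    (w : T → T → ℝ) (wb : T → ℝ) (g : ℝ → ℝ → ℝ) (h : T → ℝ) (K : T) : ℝ :=
  (∑ L, (max (U K L) 0 * g (h K) (h L) - max (-(U K L)) 0 * g (h L) (h K)))
    + max (b K) 0 * g (h K) 1 - max (-(b K)) 0 * g 1 (h K)
    - (∑ L, w K L * (h L - h K)) - wb K * (1 - h K)

/-- Discrete relative `φ`-entropy. -/
noncomputable def discreteEntropy {T : Type*} [Fintype T] (m : T → ℝ) (η : ℝ → ℝ)
    (c : T → ℝ) (finf : T → ℝ) (φ : ℝ → ℝ) (u : T → ℝ) : ℝ :=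
  ∑ K, m K * ∫ s in (finf K)..(u K), deriv φ (η s / c K)

/-- Discrete physical dissipation. -/
noncomputable def discreteDissipation {T : Type*} [Fintype T] (w : T → T → ℝ)
    (wb : T → ℝ) (φ : ℝ → ℝ) (h : T → ℝ) : ℝ :=
  -∑ K, deriv φ (h K) * ((∑ L, w K L * (h L - h K)) + wb K * (1 - h K))

lemma aux_opp_sign {p : ℝ → ℝ} (hp : Monotone p) (x y : ℝ) :
    (p x - p y) * (y - x) ≤ 0 := by
  rcases le_total x y with h | h
  · nlinarith [hp h]
  · nlinarith [hp h]

lemma aux_star {p φ : ℝ → ℝ} {g : ℝ → ℝ → ℝ} (hp : Monotone p)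
    (htan : ∀ x y : ℝ, φ x + p x * (y - x) ≤ φ y)
    (hg2 : ∀ s : ℝ, Antitone (g s)) (hgss : ∀ s : ℝ, g s s = s)
    (a b : ℝ) :
    (a * p a - φ a) - (b * p b - φ b) ≤ (p a - p b) * g a b := by
  have h1 : φ b + p b * (a - b) ≤ φ a := htan b a
  rcases le_total a b with h | h
  · have h2 : p a ≤ p b := hp h
    have h3 : g a b ≤ a := by simpa [hgss a] using hg2 a h
    nlinarith [mul_nonneg (sub_nonneg.2 h2) (sub_nonneg.2 h3)]
  · have h2 : p b ≤ p a := hp h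
    have h3 : a ≤ g a b := by simpa [hgss a] using hg2 a h
    nlinarith [mul_nonneg (sub_nonneg.2 h2) (sub_nonneg.2 h3)]

lemma aux_integral_le {ψ : ℝ → ℝ} (hc : Continuous ψ) (hm : Monotone ψ) (a b : ℝ) :
    (∫ s in a..b, ψ s) ≤ (b - a) * ψ b := by
  rcases le_total a b with h | h
  · have h1 : (∫ s in a..b, ψ s) ≤ ∫ _s in a..b, ψ b := by
      apply intervalIntegral.integral_mono_on h (hc.intervalIntegrable _ _)
        intervalIntegrable_const
      intro x hx; exact hm hx.2
    rw [intervalIntegral.integral_const, smul_eq_mul] at h1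
    exact h1
  · rw [intervalIntegral.integral_symm]
    have h1 : (∫ _s in b..a, ψ b) ≤ ∫ s in b..a, ψ s := by
      apply intervalIntegral.integral_mono_on h intervalIntegrable_const
        (hc.intervalIntegrable _ _)
      intro x hx; exact hm hx.1
    rw [intervalIntegral.integral_const, smul_eq_mul] at h1
    linarith

lemma aux_max_sub (x : ℝ) : max x 0 - max (-x) 0 = x := by
  rcases le_total x 0 with h | h
  · simp [max_eq_right h, max_eq_left (neg_nonneg.2 h)]
  · simp [max_eq_left h, max_eq_right (neg_nonpos.2 h)]

theorem stmt_6 {T : Type*} [Fintype T] [Nonempty T]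
    (m : T → ℝ) (hm : ∀ K, 0 < m K) (Δt : ℝ) (hΔt : 0 < Δt)
    (U : T → T → ℝ) (hU : ∀ K L, U K L = -(U L K))
    (b : T → ℝ) (hdiv : ∀ K, (∑ L, U K L) + b K = 0)
    (w : T → T → ℝ) (hw_symm : ∀ K L, w K L = w L K)
    (hw_nonneg : ∀ K L, 0 ≤ w K L)
    (wb : T → ℝ) (hwb : ∀ K, 0 ≤ wb K)
    (η : ℝ → ℝ) (hηc : Continuous η) (hηm : StrictMono η)
    (hηb : Function.Bijective η) (hη0 : η 0 = 0)
    (c : T → ℝ) (hc : ∀ K, 0 < c K)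
    (finf : T → ℝ) (hfinf : ∀ K, η (finf K) = c K)
    (g : ℝ → ℝ → ℝ)
    (hg1 : ∀ t : ℝ, Monotone (fun s => g s t))
    (hg2 : ∀ s : ℝ, Antitone (g s))
    (hgss : ∀ s : ℝ, g s s = s)
    (φ : ℝ → ℝ) (hφ : ContDiff ℝ 2 φ)
    (hφconv : StrictConvexOn ℝ Set.univ φ)
    (hφ1 : φ 1 = 0) (hφ'1 : deriv φ 1 = 0)
    (f f' : T → ℝ)
    (hscheme : ∀ K, m K * (f' K - f K) / Δt
        + totalFlux U b w wb g (fun L => η (f' L) / c L) K = 0) :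
    0 ≤ discreteDissipation w wb φ (fun L => η (f' L) / c L) ∧
    discreteEntropy m η c finf φ f' - discreteEntropy m η c finf φ f ≤
      -Δt * discreteDissipation w wb φ (fun L => η (f' L) / c L) := by
  classical
  set h : T → ℝ := fun L => η (f' L) / c L with hhdef
  have hφd : Differentiable ℝ φ := hφ.differentiable (by norm_num)
  have hpc : Continuous (deriv φ) := hφ.continuous_deriv (by norm_num)
  have hpmono : Monotone (deriv φ) := by
    intro x y hxy
    exact hφconv.convexOn.monotoneOn_deriv (fun z _ => hφd.differentiableAt)
      (Set.mem_univ x) (Set.mem_univ y) hxy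
  have htan : ∀ x y : ℝ, φ x + deriv φ x * (y - x) ≤ φ y := by
    intro x y
    rcases lt_trichotomy x y with hxy | rfl | hxy
    · have hs := hφconv.convexOn.deriv_le_slope (Set.mem_univ x) (Set.mem_univ y)
        hxy hφd.differentiableAt
      rw [slope_def_field] at hs
      have h1 : deriv φ x * (y - x) ≤ φ y - φ x :=
        (le_div_iff₀ (by linarith)).mp hs
      linarith
    · simp
    · have hs := hφconv.convexOn.slope_le_deriv (Set.mem_univ y) (Set.mem_univ x)
        hxy hφd.differentiableAt
      rw [slope_def_field] at hs
      have h1 : φ x - φ y ≤ deriv φ x * (x - y) := (div_le_iff₀ (by linarith)).mp hs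
      linarith
  set q : ℝ → ℝ := fun s => s * deriv φ s - φ s with hqdef
  have hq1 : q 1 = 0 := by simp [hqdef, hφ'1, hφ1]
  have hstar : ∀ a b : ℝ, q a - q b ≤ (deriv φ a - deriv φ b) * g a b :=
    fun a b => aux_star hpmono htan hg2 hgss a b
  -- Part 1: nonnegativity of dissipation
  have hS1 : (∑ K, ∑ L, deriv φ (h K) * (w K L * (h L - h K))) ≤ 0 := by
    set S := ∑ K, ∑ L, deriv φ (h K) * (w K L * (h L - h K)) with hSdef
    have hswap : S = ∑ K, ∑ L, deriv φ (h L) * (w K L * (h K - h L)) := by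
      rw [hSdef, Finset.sum_comm]
      refine Finset.sum_congr rfl fun K _ => Finset.sum_congr rfl fun L _ => ?_
      rw [hw_symm L K]
    have h2 : S + S ≤ 0 := by
      nth_rewrite 2 [hswap]
      rw [hSdef, ← Finset.sum_add_distrib]
      refine Finset.sum_nonpos fun K _ => ?_
      rw [← Finset.sum_add_distrib]
      refine Finset.sum_nonpos fun L _ => ?_
      have hterm : deriv φ (h K) * (w K L * (h L - h K))
          + deriv φ (h L) * (w K L * (h K - h L))
          = w K L * ((deriv φ (h K) - deriv φ (h L)) * (h L - h K)) := by ring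
      rw [hterm]
      exact mul_nonpos_iff.2 (Or.inl ⟨hw_nonneg K L, aux_opp_sign hpmono (h K) (h L)⟩)
    linarith
  have hS2 : (∑ K, deriv φ (h K) * (wb K * (1 - h K))) ≤ 0 := by
    refine Finset.sum_nonpos fun K _ => ?_
    have h1 : (deriv φ (h K) - deriv φ 1) * (1 - h K) ≤ 0 := aux_opp_sign hpmono (h K) 1
    rw [hφ'1, sub_zero] at h1
    have hterm : deriv φ (h K) * (wb K * (1 - h K))
        = wb K * (deriv φ (h K) * (1 - h K)) := by ring
    rw [hterm]
    exact mul_nonpos_iff.2 (Or.inl ⟨hwb K, h1⟩)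
  have hDsum : (∑ K, deriv φ (h K) * ((∑ L, w K L * (h L - h K)) + wb K * (1 - h K))) ≤ 0 := by
    have he : (∑ K, deriv φ (h K) * ((∑ L, w K L * (h L - h K)) + wb K * (1 - h K)))
        = (∑ K, ∑ L, deriv φ (h K) * (w K L * (h L - h K)))
          + ∑ K, deriv φ (h K) * (wb K * (1 - h K)) := by
      rw [← Finset.sum_add_distrib]
      refine Finset.sum_congr rfl fun K _ => ?_
      rw [mul_add, Finset.mul_sum]
    rw [he]
    linarith
  have hDiss : 0 ≤ discreteDissipation w wb φ h := by
    rw [discreteDissipation, neg_nonneg]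
    exact hDsum
  refine ⟨hDiss, ?_⟩
  -- Part 2
  have hΔ : (Δt : ℝ) ≠ 0 := ne_of_gt hΔt
  have hscheme' : ∀ K, m K * (f' K - f K) = -Δt * totalFlux U b w wb g h K := by
    intro K
    have h1 : m K * (f' K - f K) / Δt = -totalFlux U b w wb g h K := by
      linarith [hscheme K]
    rw [div_eq_iff hΔ] at h1
    linarith [h1]
  have hIntg : ∀ K : T, Continuous fun s => deriv φ (η s / c K) :=
    fun K => hpc.comp (hηc.div_const _)
  have hEntDiff : discreteEntropy m η c finf φ f' - discreteEntropy m η c finf φ f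
      = ∑ K, m K * ∫ s in (f K)..(f' K), deriv φ (η s / c K) := by
    rw [discreteEntropy, discreteEntropy, ← Finset.sum_sub_distrib]
    refine Finset.sum_congr rfl fun K _ => ?_
    rw [← mul_sub]
    congr 1
    exact intervalIntegral.integral_interval_sub_left
      ((hIntg K).intervalIntegrable _ _) ((hIntg K).intervalIntegrable _ _)
  have hIle : ∀ K, (∫ s in (f K)..(f' K), deriv φ (η s / c K))
      ≤ (f' K - f K) * deriv φ (h K) := by
    intro K
    have hmono : Monotone fun s => deriv φ (η s / c K) := by
      intro x y hxy
      exact hpmono (div_le_div_of_nonneg_right (hηm.monotone hxy) (hc K).le)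
    have := aux_integral_le (hIntg K) hmono (f K) (f' K)
    simpa [hhdef] using this
  have hsum1 : discreteEntropy m η c finf φ f' - discreteEntropy m η c finf φ f
      ≤ ∑ K, m K * ((f' K - f K) * deriv φ (h K)) := by
    rw [hEntDiff]
    exact Finset.sum_le_sum fun K _ => mul_le_mul_of_nonneg_left (hIle K) (hm K).le
  have hsum2 : (∑ K, m K * ((f' K - f K) * deriv φ (h K)))
      = -Δt * ∑ K, deriv φ (h K) * totalFlux U b w wb g h K := by
    rw [Finset.mul_sum]
    refine Finset.sum_congr rfl fun K _ => ?_
    calc m K * ((f' K - f K) * deriv φ (h K))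
        = (m K * (f' K - f K)) * deriv φ (h K) := by ring
      _ = (-Δt * totalFlux U b w wb g h K) * deriv φ (h K) := by rw [hscheme' K]
      _ = -Δt * (deriv φ (h K) * totalFlux U b w wb g h K) := by ring
  -- decompose flux sum
  set Csum := ∑ K, deriv φ (h K) *
      ((∑ L, (max (U K L) 0 * g (h K) (h L) - max (-(U K L)) 0 * g (h L) (h K)))
        + max (b K) 0 * g (h K) 1 - max (-(b K)) 0 * g 1 (h K)) with hCsumdef
  set Dsum := ∑ K, deriv φ (h K) * ((∑ L, w K L * (h L - h K)) + wb K * (1 - h K))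
    with hDsumdef
  have hGdecomp : (∑ K, deriv φ (h K) * totalFlux U b w wb g h K) = Csum - Dsum := by
    rw [hCsumdef, hDsumdef, ← Finset.sum_sub_distrib]
    refine Finset.sum_congr rfl fun K _ => ?_
    rw [totalFlux]
    ring
  -- convective part nonnegative
  set Interior := ∑ K, ∑ L,
      (max (U K L) 0 * (deriv φ (h K) * g (h K) (h L) - q (h K))
        - max (-(U K L)) 0 * (deriv φ (h K) * g (h L) (h K) - q (h K))) with hIntdef
  set Boundary := ∑ K,
      (max (b K) 0 * (deriv φ (h K) * g (h K) 1 - q (h K))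
        - max (-(b K)) 0 * (deriv φ (h K) * g 1 (h K) - q (h K))) with hBdef
  have hCsum_eq : Csum = Interior + Boundary := by
    have hperK : ∀ K, deriv φ (h K) *
        ((∑ L, (max (U K L) 0 * g (h K) (h L) - max (-(U K L)) 0 * g (h L) (h K)))
          + max (b K) 0 * g (h K) 1 - max (-(b K)) 0 * g 1 (h K))
        = (∑ L, (max (U K L) 0 * (deriv φ (h K) * g (h K) (h L) - q (h K))
            - max (-(U K L)) 0 * (deriv φ (h K) * g (h L) (h K) - q (h K))))
          + (max (b K) 0 * (deriv φ (h K) * g (h K) 1 - q (h K))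
            - max (-(b K)) 0 * (deriv φ (h K) * g 1 (h K) - q (h K)))
          + q (h K) * ((∑ L, U K L) + b K) := by
      intro K
      have e1 : (∑ L, (max (U K L) 0 * (deriv φ (h K) * g (h K) (h L) - q (h K))
            - max (-(U K L)) 0 * (deriv φ (h K) * g (h L) (h K) - q (h K))))
          = deriv φ (h K) * (∑ L, (max (U K L) 0 * g (h K) (h L)
              - max (-(U K L)) 0 * g (h L) (h K)))
            - q (h K) * ∑ L, U K L := by
        rw [Finset.mul_sum, Finset.mul_sum, ← Finset.sum_sub_distrib]
        refine Finset.sum_congr rfl fun L _ => ?_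
        linear_combination (-(q (h K))) * aux_max_sub (U K L)
      rw [e1]
      linear_combination (q (h K)) * aux_max_sub (b K)
    calc Csum = ∑ K, ((∑ L, (max (U K L) 0 * (deriv φ (h K) * g (h K) (h L) - q (h K))
            - max (-(U K L)) 0 * (deriv φ (h K) * g (h L) (h K) - q (h K))))
          + (max (b K) 0 * (deriv φ (h K) * g (h K) 1 - q (h K))
            - max (-(b K)) 0 * (deriv φ (h K) * g 1 (h K) - q (h K)))
          + q (h K) * ((∑ L, U K L) + b K)) := by
          rw [hCsumdef]; exact Finset.sum_congr rfl fun K _ => hperK K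
      _ = ∑ K, ((∑ L, (max (U K L) 0 * (deriv φ (h K) * g (h K) (h L) - q (h K))
            - max (-(U K L)) 0 * (deriv φ (h K) * g (h L) (h K) - q (h K))))
          + (max (b K) 0 * (deriv φ (h K) * g (h K) 1 - q (h K))
            - max (-(b K)) 0 * (deriv φ (h K) * g 1 (h K) - q (h K)))) := by
          refine Finset.sum_congr rfl fun K _ => ?_
          rw [hdiv K, mul_zero, add_zero]
      _ = Interior + Boundary := by
          rw [hIntdef, hBdef, ← Finset.sum_add_distrib]
  have hInterior : 0 ≤ Interior := by
    have hIseg : (∑ K, ∑ L, max (-(U K L)) 0 * (deriv φ (h K) * g (h L) (h K) - q (h K)))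
        = ∑ K, ∑ L, max (U K L) 0 * (deriv φ (h L) * g (h K) (h L) - q (h L)) := by
      rw [Finset.sum_comm]
      refine Finset.sum_congr rfl fun K _ => Finset.sum_congr rfl fun L _ => ?_
      rw [hU L K, neg_neg]
    have he : Interior = ∑ K, ∑ L, max (U K L) 0 *
        ((deriv φ (h K) * g (h K) (h L) - q (h K))
          - (deriv φ (h L) * g (h K) (h L) - q (h L))) := by
      calc Interior
          = (∑ K, ∑ L, max (U K L) 0 * (deriv φ (h K) * g (h K) (h L) - q (h K)))
            - ∑ K, ∑ L, max (-(U K L)) 0 * (deriv φ (h K) * g (h L) (h K) - q (h K)) := by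
            rw [hIntdef, ← Finset.sum_sub_distrib]
            exact Finset.sum_congr rfl fun K _ => Finset.sum_sub_distrib _ _
        _ = (∑ K, ∑ L, max (U K L) 0 * (deriv φ (h K) * g (h K) (h L) - q (h K)))
            - ∑ K, ∑ L, max (U K L) 0 * (deriv φ (h L) * g (h K) (h L) - q (h L)) := by
            rw [hIseg]
        _ = _ := by
            rw [← Finset.sum_sub_distrib]
            refine Finset.sum_congr rfl fun K _ => ?_
            rw [← Finset.sum_sub_distrib]
            exact Finset.sum_congr rfl fun L _ => (mul_sub _ _ _).symm
    rw [he]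
    refine Finset.sum_nonneg fun K _ => Finset.sum_nonneg fun L _ => ?_
    refine mul_nonneg (le_max_right _ _) ?_
    have := hstar (h K) (h L)
    have hq : q (h K) = h K * deriv φ (h K) - φ (h K) := rfl
    nlinarith [this]
  have hBoundary : 0 ≤ Boundary := by
    rw [hBdef]
    refine Finset.sum_nonneg fun K _ => ?_
    have h1 : 0 ≤ deriv φ (h K) * g (h K) 1 - q (h K) := by
      have := hstar (h K) 1
      rw [hq1, hφ'1, sub_zero, sub_zero] at this
      linarith
    have h2 : deriv φ (h K) * g 1 (h K) - q (h K) ≤ 0 := by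
      have := hstar 1 (h K)
      rw [hq1, hφ'1, zero_sub, zero_sub, neg_mul] at this
      linarith
    have h3 : 0 ≤ max (b K) 0 * (deriv φ (h K) * g (h K) 1 - q (h K)) :=
      mul_nonneg (le_max_right _ _) h1
    have h4 : max (-(b K)) 0 * (deriv φ (h K) * g 1 (h K) - q (h K)) ≤ 0 :=
      mul_nonpos_iff.2 (Or.inl ⟨le_max_right _ _, h2⟩)
    linarith
  -- conclude
  have hfinal : discreteEntropy m η c finf φ f' - discreteEntropy m η c finf φ f
      ≤ -Δt * (Csum - Dsum) := by
    rw [← hGdecomp, ← hsum2]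
    exact hsum1
  have hDval : discreteDissipation w wb φ h = -Dsum := by
    rw [discreteDissipation, hDsumdef]
  rw [hDval]
  have hCnn : 0 ≤ Δt * Csum := mul_nonneg hΔt.le (by linarith [hInterior, hBoundary, hCsum_eq.ge, hCsum_eq.le] )
  nlinarith [hfinal, hCnn]
end

section
/- Let T be a nonempty finite set, m : T → (0,∞), let η : ℝ → ℝ be a continuous, strictly increasing bijection of ℝ with η(0) = 0, let 0 < m∞ ≤ M∞ and c : T → [m∞, M∞], and set f∞ K = η⁻¹(c K). Let K_in > 0 satisfy η(K_in)/m∞ > 1 and let f⁰ : T → [0, K_in]. Suppose f : T → ℝ is such that for every twice continuously differentiable, strictly convex function φ : ℝ → [0,∞) with φ(1) = 0 and φ'(1) = 0 one has Σ_{K∈T} m K · ∫_{f∞ K}^{f K} φ'(η(s)/c K) ds ≤ Σ_{K∈T} m K · ∫_{f∞ K}^{f⁰ K} φ'(η(s)/c K) ds. Then for every K ∈ T, 0 ≤ η(f K)/c K ≤ η(K_in)/m∞; in particular 0 ≤ f K ≤ η⁻¹( (M∞/m∞)·η(K_in) ). -/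
open Finset

noncomputable section EntropyHelpers

/-- The exponential entropy generating function `φ_t`. -/
def ephi (t : ℝ) : ℝ → ℝ := fun x => Real.exp (t*(x-1)) - 1 - t*(x-1)

/-- Its derivative. -/
def egd (t : ℝ) : ℝ → ℝ := fun x => t * (Real.exp (t*(x-1)) - 1)

lemma ephi_hasDeriv (t x : ℝ) : HasDerivAt (ephi t) (egd t x) x := by
  have h1 : HasDerivAt (fun x : ℝ => t*(x-1)) t x := by
    simpa using ((hasDerivAt_id x).sub_const 1).const_mul t
  have h2 := (Real.hasDerivAt_exp (t*(x-1))).comp x h1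
  have h3 := (h2.sub_const 1).sub h1
  exact h3.congr_deriv (by unfold egd; ring)

lemma ephi_deriv (t : ℝ) : deriv (ephi t) = egd t := by
  funext x; exact (ephi_hasDeriv t x).deriv

lemma egd_hasDeriv (t x : ℝ) : HasDerivAt (egd t) (t^2 * Real.exp (t*(x-1))) x := by
  have h1 : HasDerivAt (fun x : ℝ => t*(x-1)) t x := by
    simpa using ((hasDerivAt_id x).sub_const 1).const_mul t
  have h2 := (((Real.hasDerivAt_exp (t*(x-1))).comp x h1).sub_const 1).const_mul t
  exact h2.congr_deriv (by ring)

lemma ephi_contDiff (t : ℝ) : ContDiff ℝ 2 (ephi t) := by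
  unfold ephi; fun_prop

lemma egd_continuous (t : ℝ) : Continuous (egd t) := by
  unfold egd; fun_prop

lemma ephi_strictConvex {t : ℝ} (ht : t ≠ 0) : StrictConvexOn ℝ Set.univ (ephi t) := by
  apply strictConvexOn_of_deriv2_pos convex_univ (ephi_contDiff t).continuous.continuousOn
  intro x _
  have h : deriv^[2] (ephi t) x = t^2 * Real.exp (t*(x-1)) := by
    show deriv (deriv (ephi t)) x = _
    rw [ephi_deriv]; exact (egd_hasDeriv t x).deriv
  rw [h]; positivity

lemma ephi_nonneg (t x : ℝ) : 0 ≤ ephi t x := by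
  have := Real.add_one_le_exp (t*(x-1)); unfold ephi; linarith

lemma ephi_one (t : ℝ) : ephi t 1 = 0 := by simp [ephi]

lemma egd_one (t : ℝ) : egd t 1 = 0 := by simp [egd]

lemma egd_nonneg (t : ℝ) {x : ℝ} (hx : 1 ≤ x) : 0 ≤ egd t x := by
  unfold egd
  rcases le_or_gt t 0 with h | h
  · have h1 : Real.exp (t*(x-1)) ≤ 1 :=
      Real.exp_le_one_iff.mpr (by nlinarith)
    nlinarith
  · have h1 : 1 ≤ Real.exp (t*(x-1)) :=
      Real.one_le_exp_iff.mpr (mul_nonneg h.le (by linarith))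
    nlinarith

lemma egd_nonpos (t : ℝ) {x : ℝ} (hx : x ≤ 1) : egd t x ≤ 0 := by
  unfold egd
  rcases le_or_gt t 0 with h | h
  · have h1 : 1 ≤ Real.exp (t*(x-1)) :=
      Real.one_le_exp_iff.mpr (by nlinarith)
    nlinarith
  · have h1 : Real.exp (t*(x-1)) ≤ 1 :=
      Real.exp_le_one_iff.mpr (by nlinarith)
    nlinarith

/-- The core comparison: from the entropy inequality for a single entropy derivative `g`,
a lower bound on one cell is dominated by the bound on the initial data. -/
lemma core {T : Type*} [Fintype T]
    (m : T → ℝ) (hm : ∀ K, 0 < m K)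
    (η : ℝ → ℝ) (hηc : Continuous η) (hηm : StrictMono η) (hη0 : η 0 = 0)
    (minf : ℝ) (hminf : 0 < minf)
    (c : T → ℝ) (hcm : ∀ K, minf ≤ c K)
    (finf : T → ℝ) (hfinf : ∀ K, η (finf K) = c K)
    (Kin : ℝ) (hKinpos : 0 ≤ η Kin) (hu0 : 1 ≤ η Kin / minf)
    (f0 : T → ℝ) (hf0 : ∀ K, f0 K ∈ Set.Icc 0 Kin)
    (f : T → ℝ)
    (g : ℝ → ℝ) (hgc : Continuous g)
    (hgpos : ∀ x, 1 ≤ x → 0 ≤ g x) (hgneg : ∀ x, x ≤ 1 → g x ≤ 0)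
    (B : ℝ) (hB : ∀ x, 0 ≤ x → x ≤ η Kin / minf → |g x| ≤ B)
    (hent1 : (∑ K, m K * ∫ s in (finf K)..(f K), g (η s / c K)) ≤
        ∑ K, m K * ∫ s in (finf K)..(f0 K), g (η s / c K))
    (K₀ : T) (x₁ x₂ : ℝ) (h12 : x₁ ≤ x₂) (C : ℝ)
    (hcase : (finf K₀ ≤ x₁ ∧ x₂ ≤ f K₀ ∧ ∀ s ∈ Set.Icc x₁ x₂, C ≤ g (η s / c K₀)) ∨
       (f K₀ ≤ x₁ ∧ x₂ ≤ finf K₀ ∧ ∀ s ∈ Set.Icc x₁ x₂, g (η s / c K₀) ≤ -C)) :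
    m K₀ * ((x₂ - x₁) * C) ≤ B * ∑ K, m K * |f0 K - finf K| := by
  have hcpos : ∀ K, 0 < c K := fun K => lt_of_lt_of_le hminf (hcm K)
  have hInt : ∀ (K : T) (a b : ℝ),
      IntervalIntegrable (fun s => g (η s / c K)) MeasureTheory.volume a b :=
    fun K a b => ((hgc.comp (hηc.div_const _)).intervalIntegrable a b)
  have hsgnp : ∀ (K : T) (s : ℝ), finf K ≤ s → 0 ≤ g (η s / c K) := by
    intro K s hs
    exact hgpos _ ((one_le_div (hcpos K)).mpr (by rw [← hfinf K]; exact hηm.le_iff_le.mpr hs))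
  have hsgnn : ∀ (K : T) (s : ℝ), s ≤ finf K → g (η s / c K) ≤ 0 := by
    intro K s hs
    exact hgneg _ ((div_le_one (hcpos K)).mpr (by rw [← hfinf K]; exact hηm.le_iff_le.mpr hs))
  have hnonpos : ∀ (K : T) (a b : ℝ), a ≤ b → (∀ s ∈ Set.Icc a b, g (η s / c K) ≤ 0) →
      (∫ s in a..b, g (η s / c K)) ≤ 0 := by
    intro K a b hab hf
    have h0 : 0 ≤ ∫ s in a..b, -g (η s / c K) :=
      intervalIntegral.integral_nonneg hab (fun s hs => neg_nonneg.mpr (hf s hs))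
    rw [intervalIntegral.integral_neg] at h0
    linarith
  have hI_nonneg : ∀ K : T, 0 ≤ ∫ s in (finf K)..(f K), g (η s / c K) := by
    intro K
    rcases le_total (finf K) (f K) with h | h
    · exact intervalIntegral.integral_nonneg h (fun s hs => hsgnp K s hs.1)
    · rw [intervalIntegral.integral_symm, neg_nonneg]
      exact hnonpos K _ _ h (fun s hs => hsgnn K s hs.2)
  -- lower bound for the K₀ term
  have hlow : (x₂ - x₁) * C ≤ ∫ s in (finf K₀)..(f K₀), g (η s / c K₀) := by
    rcases hcase with ⟨h1, h2, h3⟩ | ⟨h1, h2, h3⟩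
    · have ha := intervalIntegral.integral_add_adjacent_intervals
        (hInt K₀ (finf K₀) x₁) (hInt K₀ x₁ x₂)
      have hb := intervalIntegral.integral_add_adjacent_intervals
        (hInt K₀ (finf K₀) x₂) (hInt K₀ x₂ (f K₀))
      have p1 : 0 ≤ ∫ s in (finf K₀)..x₁, g (η s / c K₀) :=
        intervalIntegral.integral_nonneg h1 (fun s hs => hsgnp K₀ s hs.1)
      have p3 : 0 ≤ ∫ s in x₂..(f K₀), g (η s / c K₀) :=
        intervalIntegral.integral_nonneg h2
          (fun s hs => hsgnp K₀ s (le_trans (le_trans h1 h12) hs.1))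
      have p2 : (x₂ - x₁) * C ≤ ∫ s in x₁..x₂, g (η s / c K₀) := by
        have := intervalIntegral.integral_mono_on h12
          (_root_.intervalIntegrable_const (c := C)) (hInt K₀ x₁ x₂) h3
        simpa [intervalIntegral.integral_const, smul_eq_mul, mul_comm] using this
      linarith
    · have ha := intervalIntegral.integral_add_adjacent_intervals
        (hInt K₀ (f K₀) x₁) (hInt K₀ x₁ x₂)
      have hb := intervalIntegral.integral_add_adjacent_intervals
        (hInt K₀ (f K₀) x₂) (hInt K₀ x₂ (finf K₀))
      have hsym : (∫ s in (finf K₀)..(f K₀), g (η s / c K₀)) =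
          -∫ s in (f K₀)..(finf K₀), g (η s / c K₀) := by
        rw [intervalIntegral.integral_symm]
      have p1 : (∫ s in (f K₀)..x₁, g (η s / c K₀)) ≤ 0 :=
        hnonpos K₀ _ _ h1 (fun s hs => hsgnn K₀ s (le_trans hs.2 (le_trans h12 h2)))
      have p3 : (∫ s in x₂..(finf K₀), g (η s / c K₀)) ≤ 0 :=
        hnonpos K₀ _ _ h2 (fun s hs => hsgnn K₀ s hs.2)
      have p2 : (∫ s in x₁..x₂, g (η s / c K₀)) ≤ (x₂ - x₁) * (-C) := by
        have := intervalIntegral.integral_mono_on h12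
          (hInt K₀ x₁ x₂) (_root_.intervalIntegrable_const (c := -C)) h3
        simpa [intervalIntegral.integral_const, smul_eq_mul, mul_comm] using this
      rw [hsym]
      linarith
  have hsingle : m K₀ * ∫ s in (finf K₀)..(f K₀), g (η s / c K₀) ≤
      ∑ K, m K * ∫ s in (finf K)..(f K), g (η s / c K) :=
    Finset.single_le_sum (fun K _ => mul_nonneg (hm K).le (hI_nonneg K)) (mem_univ K₀)
  have hfinfpos : ∀ K : T, 0 ≤ finf K := by
    intro K
    have : η 0 < η (finf K) := by rw [hη0, hfinf K]; exact hcpos K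
    exact (hηm.lt_iff_lt.mp this).le
  have hRterm : ∀ K : T, (∫ s in (finf K)..(f0 K), g (η s / c K)) ≤ B * |f0 K - finf K| := by
    intro K
    have hbd : ∀ x ∈ Set.uIoc (finf K) (f0 K), ‖g (η x / c K)‖ ≤ B := by
      intro x hx
      rw [Set.uIoc_eq_union] at hx
      have hx0 : 0 ≤ x := by
        rcases hx with hx | hx
        · exact le_trans (hfinfpos K) hx.1.le
        · exact le_trans (hf0 K).1 hx.1.le
      have hxup : x ≤ max (finf K) (f0 K) := by
        rcases hx with hx | hx
        · exact le_trans hx.2 (le_max_right _ _)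
        · exact le_trans hx.2 (le_max_left _ _)
      have h1 : 0 ≤ η x / c K :=
        div_nonneg (by rw [← hη0]; exact hηm.le_iff_le.mpr hx0) (hcpos K).le
      have h2 : η x / c K ≤ η Kin / minf := by
        have hxm : η x ≤ max (η (finf K)) (η (f0 K)) := by
          rcases le_total (finf K) (f0 K) with h | h
          · exact le_trans (hηm.le_iff_le.mpr (by simpa [max_eq_right h] using hxup))
              (le_max_right _ _)
          · exact le_trans (hηm.le_iff_le.mpr (by simpa [max_eq_left h] using hxup))
              (le_max_left _ _)
        rcases max_cases (η (finf K)) (η (f0 K)) with ⟨he, _⟩ | ⟨he, _⟩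
        · rw [he] at hxm
          have hq : η x / c K ≤ 1 := by
            rw [div_le_one (hcpos K), ← hfinf K]; exact hxm
          linarith
        · rw [he] at hxm
          calc η x / c K ≤ η (f0 K) / c K :=
                (div_le_div_iff_of_pos_right (hcpos K)).mpr hxm
            _ ≤ η Kin / minf :=
                div_le_div₀ hKinpos (hηm.le_iff_le.mpr (hf0 K).2) hminf (hcm K)
      simpa [Real.norm_eq_abs] using hB _ h1 h2
    have hnn := intervalIntegral.norm_integral_le_of_norm_le_const (C := B) hbd
    rw [Real.norm_eq_abs] at hnn
    calc (∫ s in (finf K)..(f0 K), g (η s / c K)) ≤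
        |∫ s in (finf K)..(f0 K), g (η s / c K)| := le_abs_self _
      _ ≤ B * |f0 K - finf K| := hnn
  have hsumR : (∑ K, m K * ∫ s in (finf K)..(f0 K), g (η s / c K)) ≤
      B * ∑ K, m K * |f0 K - finf K| := by
    rw [Finset.mul_sum]
    refine Finset.sum_le_sum (fun K _ => ?_)
    calc m K * ∫ s in (finf K)..(f0 K), g (η s / c K) ≤ m K * (B * |f0 K - finf K|) :=
          mul_le_mul_of_nonneg_left (hRterm K) (hm K).le
      _ = B * (m K * |f0 K - finf K|) := by ring
  calc m K₀ * ((x₂ - x₁) * C) ≤ m K₀ * ∫ s in (finf K₀)..(f K₀), g (η s / c K₀) :=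
        mul_le_mul_of_nonneg_left hlow (hm K₀).le
    _ ≤ _ := le_trans hsingle (le_trans hent1 hsumR)

/-- Exponential growth comparison: impossible for all `t > 0`. -/
lemma tailcontra (S D a b : ℝ) (hD : 0 < D) (hS : 0 ≤ S) (hb : 0 ≤ b) (hab : b < a)
    (h : ∀ t : ℝ, 0 < t → D * (Real.exp (t*a) - 1) ≤ Real.exp (t*b) * S) : False := by
  have hδ : 0 < a - b := by linarith
  have key : ∀ t : ℝ, 0 < t → D * Real.exp (t*(a-b)) ≤ S + D := by
    intro t ht
    have h1 := h t ht
    have h2 : Real.exp (t*a) = Real.exp (t*b) * Real.exp (t*(a-b)) := by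
      rw [← Real.exp_add]; congr 1; ring
    have h3 : 1 ≤ Real.exp (t*b) := Real.one_le_exp (by positivity)
    have h4 : Real.exp (t*b) * (D * Real.exp (t*(a-b))) ≤ Real.exp (t*b) * (S + D) := by
      nlinarith
    exact le_of_mul_le_mul_left h4 (Real.exp_pos _)
  set M := (S + D)/D with hMdef
  have hM : 1 ≤ M := (le_div_iff₀ hD).mpr (by linarith)
  have ht : 0 < M/(a-b) := by positivity
  have hk := key (M/(a-b)) ht
  rw [div_mul_cancel₀ M hδ.ne'] at hk
  have he := Real.add_one_le_exp M
  have hDM : D * M = S + D := by rw [hMdef]; field_simp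
  nlinarith

end EntropyHelpers

set_option maxHeartbeats 1000000 in
theorem stmt_8 {T : Type*} [Fintype T] [Nonempty T]
    (m : T → ℝ) (hm : ∀ K, 0 < m K)
    (η : ℝ → ℝ) (hηc : Continuous η) (hηm : StrictMono η)
    (hηb : Function.Bijective η) (hη0 : η 0 = 0)
    (minf Minf : ℝ) (hminf : 0 < minf) (hmM : minf ≤ Minf)
    (c : T → ℝ) (hc : ∀ K, c K ∈ Set.Icc minf Minf)
    (finf : T → ℝ) (hfinf : ∀ K, η (finf K) = c K)
    (Kin : ℝ) (hKin : 0 < Kin) (hKin1 : 1 < η Kin / minf)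
    (f0 : T → ℝ) (hf0 : ∀ K, f0 K ∈ Set.Icc 0 Kin)
    (f : T → ℝ)
    (hent : ∀ φ : ℝ → ℝ, ContDiff ℝ 2 φ → StrictConvexOn ℝ Set.univ φ →
      (∀ x, 0 ≤ φ x) → φ 1 = 0 → deriv φ 1 = 0 →
      (∑ K, m K * ∫ s in (finf K)..(f K), deriv φ (η s / c K)) ≤
        ∑ K, m K * ∫ s in (finf K)..(f0 K), deriv φ (η s / c K)) :
    ∀ K, 0 ≤ η (f K) / c K ∧ η (f K) / c K ≤ η Kin / minf ∧
      0 ≤ f K ∧ f K ≤ Function.invFun η ((Minf / minf) * η Kin) := by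
  have hcpos : ∀ K, 0 < c K := fun K => lt_of_lt_of_le hminf (hc K).1
  have hKη : minf < η Kin := (one_lt_div hminf).mp hKin1
  have hKηpos : 0 ≤ η Kin := le_of_lt (lt_trans hminf hKη)
  have hS : 0 ≤ ∑ K, m K * |f0 K - finf K| :=
    Finset.sum_nonneg fun K _ => mul_nonneg (hm K).le (abs_nonneg _)
  have hentE : ∀ t : ℝ, t ≠ 0 →
      (∑ K, m K * ∫ s in (finf K)..(f K), egd t (η s / c K)) ≤
        ∑ K, m K * ∫ s in (finf K)..(f0 K), egd t (η s / c K) := by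
    intro t ht
    have := hent (ephi t) (ephi_contDiff t) (ephi_strictConvex ht)
      (ephi_nonneg t) (ephi_one t) (by rw [ephi_deriv]; exact egd_one t)
    simpa only [ephi_deriv] using this
  have claim_up : ∀ K₀, η (f K₀) / c K₀ ≤ η Kin / minf := by
    intro K₀
    by_contra hcon
    push_neg at hcon
    have hfK : η (f K₀) = (η (f K₀) / c K₀) * c K₀ :=
      (div_mul_cancel₀ _ (hcpos K₀).ne').symm
    set u' := (η Kin / minf + η (f K₀) / c K₀)/2 with hu'def
    have hu'1 : 1 < u' := by rw [hu'def]; linarith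
    have hu'lt : u' < η (f K₀) / c K₀ := by rw [hu'def]; linarith
    have hu0u' : η Kin / minf < u' := by rw [hu'def]; linarith
    obtain ⟨s', hs'⟩ := hηb.2 (u' * c K₀)
    have h1 : finf K₀ ≤ s' := by
      apply hηm.le_iff_le.mp
      rw [hs', hfinf K₀]
      nlinarith [hcpos K₀]
    have h2 : s' < f K₀ := by
      apply hηm.lt_iff_lt.mp
      rw [hs', hfK]
      nlinarith [hcpos K₀]
    have hDpos : 0 < m K₀ * (f K₀ - s') := mul_pos (hm K₀) (by linarith)
    refine tailcontra _ _ (u'-1) (η Kin / minf - 1) hDpos hS (by linarith) (by linarith) ?_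
    intro t ht
    have hB : ∀ x, 0 ≤ x → x ≤ η Kin / minf →
        |egd t x| ≤ t * Real.exp (t*(η Kin / minf - 1)) := by
      intro x hx0 hxu
      have e1 : Real.exp (t*(x-1)) ≤ Real.exp (t*(η Kin / minf - 1)) :=
        Real.exp_le_exp.mpr (by nlinarith)
      have e2 : (1:ℝ) ≤ Real.exp (t*(η Kin / minf - 1)) :=
        Real.one_le_exp (by nlinarith)
      have e3 : 0 < Real.exp (t*(x-1)) := Real.exp_pos _
      rw [abs_le]
      constructor
      · simp only [egd]; nlinarith
      · simp only [egd]; nlinarith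
    have h3 : ∀ s ∈ Set.Icc s' (f K₀),
        t*(Real.exp (t*(u'-1)) - 1) ≤ egd t (η s / c K₀) := by
      intro s hs
      have hx : u' ≤ η s / c K₀ := by
        rw [le_div_iff₀ (hcpos K₀), ← hs']
        exact hηm.le_iff_le.mpr hs.1
      have he := Real.exp_le_exp.mpr (show t*(u'-1) ≤ t*(η s / c K₀ - 1) by nlinarith)
      simp only [egd]; nlinarith
    have hcore := core m hm η hηc hηm hη0 minf hminf c (fun K => (hc K).1) finf hfinf
      Kin hKηpos hKin1.le f0 hf0 f (egd t) (egd_continuous t)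
      (fun x hx => egd_nonneg t hx) (fun x hx => egd_nonpos t hx)
      (t * Real.exp (t*(η Kin / minf - 1))) hB (hentE t ht.ne') K₀ s' (f K₀) h2.le
      (t*(Real.exp (t*(u'-1)) - 1)) (Or.inl ⟨h1, le_refl _, h3⟩)
    have h5 : t * (m K₀ * (f K₀ - s') * (Real.exp (t*(u'-1)) - 1)) ≤
        t * (Real.exp (t*(η Kin / minf - 1)) * ∑ K, m K * |f0 K - finf K|) := by
      calc t * (m K₀ * (f K₀ - s') * (Real.exp (t*(u'-1)) - 1))
          = m K₀ * ((f K₀ - s') * (t*(Real.exp (t*(u'-1)) - 1))) := by ring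
        _ ≤ (t * Real.exp (t*(η Kin / minf - 1))) * ∑ K, m K * |f0 K - finf K| := hcore
        _ = t * (Real.exp (t*(η Kin / minf - 1)) * ∑ K, m K * |f0 K - finf K|) := by ring
    exact le_of_mul_le_mul_left h5 ht
  have claim_lo : ∀ K₀, 0 ≤ η (f K₀) / c K₀ := by
    intro K₀
    by_contra hcon
    push_neg at hcon
    have hfK : η (f K₀) = (η (f K₀) / c K₀) * c K₀ :=
      (div_mul_cancel₀ _ (hcpos K₀).ne').symm
    set u' := (η (f K₀) / c K₀)/2 with hu'def
    have hu'neg : u' < 0 := by rw [hu'def]; linarith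
    have hu2u' : η (f K₀) / c K₀ < u' := by rw [hu'def]; linarith
    obtain ⟨s', hs'⟩ := hηb.2 (u' * c K₀)
    have h1 : f K₀ < s' := by
      apply hηm.lt_iff_lt.mp
      rw [hs', hfK]
      nlinarith [hcpos K₀]
    have h2 : s' ≤ finf K₀ := by
      apply hηm.le_iff_le.mp
      rw [hs', hfinf K₀]
      nlinarith [hcpos K₀]
    have hDpos : 0 < m K₀ * (s' - f K₀) := mul_pos (hm K₀) (by linarith)
    refine tailcontra _ _ (1-u') 1 hDpos hS zero_le_one (by linarith) ?_
    intro t ht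
    have hB : ∀ x, 0 ≤ x → x ≤ η Kin / minf →
        |egd (-t) x| ≤ t * Real.exp (t*1) := by
      intro x hx0 hxu
      have e1 : Real.exp (-t*(x-1)) ≤ Real.exp (t*1) :=
        Real.exp_le_exp.mpr (by nlinarith)
      have e2 : (1:ℝ) ≤ Real.exp (t*1) := Real.one_le_exp (by nlinarith)
      have e3 : 0 < Real.exp (-t*(x-1)) := Real.exp_pos _
      rw [abs_le]
      constructor
      · simp only [egd]; nlinarith
      · simp only [egd]; nlinarith
    have h3 : ∀ s ∈ Set.Icc (f K₀) s',
        egd (-t) (η s / c K₀) ≤ -(t*(Real.exp (t*(1-u')) - 1)) := by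
      intro s hs
      have hx : η s / c K₀ ≤ u' := by
        rw [div_le_iff₀ (hcpos K₀), ← hs']
        exact hηm.le_iff_le.mpr hs.2
      have he := Real.exp_le_exp.mpr (show t*(1-u') ≤ -t*(η s / c K₀ - 1) by nlinarith)
      simp only [egd]; nlinarith
    have hcore := core m hm η hηc hηm hη0 minf hminf c (fun K => (hc K).1) finf hfinf
      Kin hKηpos hKin1.le f0 hf0 f (egd (-t)) (egd_continuous (-t))
      (fun x hx => egd_nonneg (-t) hx) (fun x hx => egd_nonpos (-t) hx)
      (t * Real.exp (t*1)) hB (hentE (-t) (neg_ne_zero.mpr ht.ne')) K₀ (f K₀) s' h1.le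
      (t*(Real.exp (t*(1-u')) - 1)) (Or.inr ⟨le_refl _, h2, h3⟩)
    have h5 : t * (m K₀ * (s' - f K₀) * (Real.exp (t*(1-u')) - 1)) ≤
        t * (Real.exp (t*1) * ∑ K, m K * |f0 K - finf K|) := by
      calc t * (m K₀ * (s' - f K₀) * (Real.exp (t*(1-u')) - 1))
          = m K₀ * ((s' - f K₀) * (t*(Real.exp (t*(1-u')) - 1))) := by ring
        _ ≤ (t * Real.exp (t*1)) * ∑ K, m K * |f0 K - finf K| := hcore
        _ = t * (Real.exp (t*1) * ∑ K, m K * |f0 K - finf K|) := by ring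
    exact le_of_mul_le_mul_left h5 ht
  intro K
  have hup := claim_up K
  have hlo := claim_lo K
  have hfKnn : 0 ≤ η (f K) := by
    have h := mul_nonneg hlo (hcpos K).le
    rwa [div_mul_cancel₀ _ (hcpos K).ne'] at h
  refine ⟨hlo, hup, ?_, ?_⟩
  · have h : η 0 ≤ η (f K) := by rwa [hη0]
    exact hηm.le_iff_le.mp h
  · have h1 : η (f K) ≤ η Kin / minf * c K := (div_le_iff₀ (hcpos K)).mp hup
    have h2 : η Kin / minf * c K ≤ η Kin / minf * Minf :=
      mul_le_mul_of_nonneg_left (hc K).2 (div_nonneg hKηpos hminf.le)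
    have h3 : η Kin / minf * Minf = Minf / minf * η Kin := by ring
    have hX : η (f K) ≤ Minf / minf * η Kin := by linarith
    have hinv : η (Function.invFun η (Minf / minf * η Kin)) = Minf / minf * η Kin :=
      Function.invFun_eq (hηb.2 _)
    exact hηm.le_iff_le.mp (by rw [hinv]; exact hX)
end

section
/- The Bernoulli function B : ℝ → ℝ defined by B(x) = x/(exp(x) − 1) for x ≠ 0 and B(0) = 1 is strictly convex on ℝ. -/
set_option linter.unnecessarySeqFocus false
set_option linter.unreachableTactic false
set_option linter.unusedTactic false

open Real Set Filter Topology

/-- The Bernoulli function `B(x) = x / (exp x - 1)`, extended by `B 0 = 1`. -/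
noncomputable def bernoulliFn : ℝ → ℝ := fun x =>
  if x = 0 then 1 else x / (Real.exp x - 1)

lemma exm1_ne {x : ℝ} (hx : x ≠ 0) : Real.exp x - 1 ≠ 0 :=
  sub_ne_zero.mpr (fun h => hx (by rwa [← Real.exp_zero, Real.exp_eq_exp] at h))

/-- The derivative of `bernoulliFn` away from `0`. -/
noncomputable def Bphi (x : ℝ) : ℝ := (Real.exp x - 1 - x * Real.exp x) / (Real.exp x - 1) ^ 2

/-- The derivative of `bernoulliFn`, everywhere. -/
noncomputable def Bd (x : ℝ) : ℝ := if x = 0 then -(1/2) else Bphi x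

/-- The second derivative of `bernoulliFn` away from `0`. -/
noncomputable def Bpsi (x : ℝ) : ℝ :=
  Real.exp x * (x * (Real.exp x + 1) - 2 * (Real.exp x - 1)) / (Real.exp x - 1) ^ 3

lemma hprime_pos {x : ℝ} (hx : x ≠ 0) : 0 < x * Real.exp x - Real.exp x + 1 := by
  have key := Real.add_one_lt_exp (neg_ne_zero.mpr hx)
  have h1 : Real.exp x * Real.exp (-x) = 1 := by rw [← Real.exp_add]; simp
  nlinarith [Real.exp_pos x, mul_lt_mul_of_pos_left key (Real.exp_pos x)]

lemma hasDerivAt_hfun (x : ℝ) :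
    HasDerivAt (fun y : ℝ => y * (Real.exp y + 1) - 2 * (Real.exp y - 1))
      (x * Real.exp x - Real.exp x + 1) x := by
  have := ((hasDerivAt_id x).mul ((Real.hasDerivAt_exp x).add_const 1)).sub
    (((Real.hasDerivAt_exp x).sub_const 1).const_mul 2)
  simp only [id_eq] at this
  exact this.congr_deriv (by ring)

lemma hfun_pos {x : ℝ} (hx : 0 < x) : 0 < x * (Real.exp x + 1) - 2 * (Real.exp x - 1) := by
  have hmono : StrictMonoOn (fun y : ℝ => y * (Real.exp y + 1) - 2 * (Real.exp y - 1)) (Ici 0) := by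
    apply strictMonoOn_of_deriv_pos (convex_Ici 0) (by fun_prop)
    intro y hy
    rw [interior_Ici] at hy
    rw [(hasDerivAt_hfun y).deriv]
    exact hprime_pos (ne_of_gt hy)
  have := hmono (self_mem_Ici) (le_of_lt hx : (0:ℝ) ≤ x) hx
  simpa using this

lemma hfun_neg {x : ℝ} (hx : x < 0) : x * (Real.exp x + 1) - 2 * (Real.exp x - 1) < 0 := by
  have hmono : StrictMonoOn (fun y : ℝ => y * (Real.exp y + 1) - 2 * (Real.exp y - 1)) (Iic 0) := by
    apply strictMonoOn_of_deriv_pos (convex_Iic 0) (by fun_prop)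
    intro y hy
    rw [interior_Iic] at hy
    rw [(hasDerivAt_hfun y).deriv]
    exact hprime_pos (ne_of_lt hy)
  have := hmono (le_of_lt hx : x ≤ 0) (self_mem_Iic) hx
  simpa using this

lemma Bpsi_pos {x : ℝ} (hx : x ≠ 0) : 0 < Bpsi x := by
  rcases hx.lt_or_gt with h | h
  · have he : Real.exp x - 1 < 0 := sub_neg.mpr (Real.exp_lt_one_iff.mpr h)
    apply div_pos_of_neg_of_neg
    · exact mul_neg_of_pos_of_neg (Real.exp_pos x) (hfun_neg h)
    · exact Odd.pow_neg (by decide) he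
  · have he : 0 < Real.exp x - 1 := sub_pos.mpr (Real.one_lt_exp_iff.mpr h)
    exact div_pos (mul_pos (Real.exp_pos x) (hfun_pos h)) (by positivity)

lemma hasDerivAt_B {x : ℝ} (hx : x ≠ 0) : HasDerivAt bernoulliFn (Bphi x) x := by
  have h1 : HasDerivAt (fun y : ℝ => y / (Real.exp y - 1))
      ((1 * (Real.exp x - 1) - x * Real.exp x) / (Real.exp x - 1) ^ 2) x :=
    (hasDerivAt_id x).div ((Real.hasDerivAt_exp x).sub_const 1) (exm1_ne hx)
  have h2 : HasDerivAt (fun y : ℝ => y / (Real.exp y - 1)) (Bphi x) x := by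
    convert h1 using 1; unfold Bphi; ring_nf
  apply h2.congr_of_eventuallyEq
  filter_upwards [eventually_ne_nhds hx] with y hy
  simp [bernoulliFn, hy]

lemma hasDerivAt_Bphi {x : ℝ} (hx : x ≠ 0) : HasDerivAt Bphi (Bpsi x) x := by
  have hnum : HasDerivAt (fun y : ℝ => Real.exp y - 1 - y * Real.exp y)
      (Real.exp x - (1 * Real.exp x + x * Real.exp x)) x := by
    have := ((Real.hasDerivAt_exp x).sub_const 1).sub
      ((hasDerivAt_id x).mul (Real.hasDerivAt_exp x))
    exact this.congr_deriv (by simp)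
  have hden : HasDerivAt (fun y : ℝ => (Real.exp y - 1) ^ 2)
      (2 * (Real.exp x - 1) ^ 1 * Real.exp x) x := by
    have := ((Real.hasDerivAt_exp x).sub_const 1).pow 2
    exact this.congr_deriv (by simp)
  have h := hnum.div hden (pow_ne_zero 2 (exm1_ne hx))
  have heq : ((Real.exp x - (1 * Real.exp x + x * Real.exp x)) * (Real.exp x - 1) ^ 2 -
        (Real.exp x - 1 - x * Real.exp x) * (2 * (Real.exp x - 1) ^ 1 * Real.exp x)) /
        ((Real.exp x - 1) ^ 2) ^ 2 = Bpsi x := by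
    unfold Bpsi
    rw [div_eq_div_iff (pow_ne_zero 2 (pow_ne_zero 2 (exm1_ne hx))) (pow_ne_zero 3 (exm1_ne hx))]
    ring
  exact heq ▸ h

lemma lim_slope_exp : Tendsto (fun y : ℝ => y / (Real.exp y - 1)) (𝓝[≠] 0) (𝓝 1) := by
  have h := Real.hasDerivAt_exp 0
  rw [Real.exp_zero] at h
  rw [hasDerivAt_iff_tendsto_slope] at h
  have h2 := h.inv₀ one_ne_zero
  rw [inv_one] at h2
  apply h2.congr'
  filter_upwards [self_mem_nhdsWithin] with y hy
  rw [slope_def_field]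
  field_simp
  simp

lemma limB : Tendsto Bphi (𝓝[≠] (0:ℝ)) (𝓝 (-(1/2))) := by
  have main : Tendsto (fun y : ℝ => (Real.exp y - 1 - y * Real.exp y) / (Real.exp y - 1) ^ 2)
      (𝓝[≠] (0:ℝ)) (𝓝 (-(1/2))) := by
    apply HasDerivAt.lhopital_zero_nhdsNE
      (f' := fun y : ℝ => -(y * Real.exp y))
      (g' := fun y : ℝ => 2 * (Real.exp y - 1) * Real.exp y)
    · filter_upwards with y
      have := ((Real.hasDerivAt_exp y).sub_const 1).sub
        ((hasDerivAt_id y).mul (Real.hasDerivAt_exp y))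
      simp only [id_eq] at this
      exact this.congr_deriv (by ring)
    · filter_upwards with y
      have := ((Real.hasDerivAt_exp y).sub_const 1).pow 2
      exact this.congr_deriv (by ring)
    · filter_upwards [self_mem_nhdsWithin] with y hy
      exact mul_ne_zero (mul_ne_zero two_ne_zero (exm1_ne hy)) (Real.exp_ne_zero y)
    · apply tendsto_nhdsWithin_of_tendsto_nhds
      have : ContinuousAt (fun y : ℝ => Real.exp y - 1 - y * Real.exp y) 0 := by fun_prop
      simpa using this.tendsto
    · apply tendsto_nhdsWithin_of_tendsto_nhds
      have : ContinuousAt (fun y : ℝ => (Real.exp y - 1) ^ 2) 0 := by fun_prop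
      simpa using this.tendsto
    · have := lim_slope_exp.const_mul (-(1/2) : ℝ)
      rw [mul_one] at this
      apply this.congr'
      filter_upwards [self_mem_nhdsWithin] with y hy
      field_simp [exm1_ne hy]
  exact main

lemma g1_ne {y : ℝ} (hy : y ≠ 0) : Real.exp y + y * Real.exp y - 1 ≠ 0 := by
  rcases hy.lt_or_gt with h | h
  · have key := Real.add_one_lt_exp (neg_ne_zero.mpr hy)
    have hmul : Real.exp y * Real.exp (-y) = 1 := by rw [← Real.exp_add]; simp
    have hpos := Real.exp_pos y
    nlinarith [mul_lt_mul_of_pos_left key hpos]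
  · nlinarith [Real.add_one_lt_exp (ne_of_gt h), Real.exp_pos y]

lemma lim_inner : Tendsto (fun y : ℝ => (1 - Real.exp y) / (Real.exp y + y * Real.exp y - 1))
    (𝓝[≠] (0:ℝ)) (𝓝 (-(1/2))) := by
  apply HasDerivAt.lhopital_zero_nhdsNE
    (f' := fun y : ℝ => -Real.exp y)
    (g' := fun y : ℝ => 2 * Real.exp y + y * Real.exp y)
  · filter_upwards with y
    exact (Real.hasDerivAt_exp y).const_sub 1
  · filter_upwards with y
    have := ((Real.hasDerivAt_exp y).add ((hasDerivAt_id y).mul (Real.hasDerivAt_exp y))).sub_const 1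
    simp only [id_eq] at this
    exact this.congr_deriv (by ring)
  · have hmem : Ioo (-1 : ℝ) 1 ∈ 𝓝[≠] (0:ℝ) :=
      nhdsWithin_le_nhds (Ioo_mem_nhds (by norm_num) (by norm_num))
    filter_upwards [hmem] with y hy
    have h2 : (0:ℝ) < 2 + y := by linarith [hy.1]
    have : 2 * Real.exp y + y * Real.exp y = Real.exp y * (2 + y) := by ring
    rw [this]
    exact mul_ne_zero (Real.exp_ne_zero y) (ne_of_gt h2)
  · apply tendsto_nhdsWithin_of_tendsto_nhds
    have : ContinuousAt (fun y : ℝ => 1 - Real.exp y) 0 := by fun_prop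
    simpa using this.tendsto
  · apply tendsto_nhdsWithin_of_tendsto_nhds
    have : ContinuousAt (fun y : ℝ => Real.exp y + y * Real.exp y - 1) 0 := by fun_prop
    simpa using this.tendsto
  · apply tendsto_nhdsWithin_of_tendsto_nhds
    have hc : ContinuousAt (fun y : ℝ => -Real.exp y / (2 * Real.exp y + y * Real.exp y)) 0 := by
      apply ContinuousAt.div (by fun_prop) (by fun_prop)
      simp [Real.exp_zero]
    convert hc.tendsto using 2
    norm_num [Real.exp_zero]

lemma lim_outer : Tendsto (fun y : ℝ => (y + 1 - Real.exp y) / (y * Real.exp y - y))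
    (𝓝[≠] (0:ℝ)) (𝓝 (-(1/2))) := by
  apply HasDerivAt.lhopital_zero_nhdsNE
    (f' := fun y : ℝ => 1 - Real.exp y)
    (g' := fun y : ℝ => Real.exp y + y * Real.exp y - 1)
  · filter_upwards with y
    have := (((hasDerivAt_id y).add_const 1).sub (Real.hasDerivAt_exp y))
    simp only [id_eq] at this
    exact this.congr_deriv (by ring)
  · filter_upwards with y
    have := ((hasDerivAt_id y).mul (Real.hasDerivAt_exp y)).sub (hasDerivAt_id y)
    simp only [id_eq] at this
    exact this.congr_deriv (by ring)
  · filter_upwards [self_mem_nhdsWithin] with y hy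
    exact g1_ne hy
  · apply tendsto_nhdsWithin_of_tendsto_nhds
    have : ContinuousAt (fun y : ℝ => y + 1 - Real.exp y) 0 := by fun_prop
    simpa using this.tendsto
  · apply tendsto_nhdsWithin_of_tendsto_nhds
    have : ContinuousAt (fun y : ℝ => y * Real.exp y - y) 0 := by fun_prop
    simpa using this.tendsto
  · exact lim_inner

lemma hasDerivAt_B0 : HasDerivAt bernoulliFn (-(1/2)) 0 := by
  rw [hasDerivAt_iff_tendsto_slope]
  apply lim_outer.congr'
  filter_upwards [self_mem_nhdsWithin] with y hy
  rw [slope_def_field]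
  have hy' : (y:ℝ) ≠ 0 := hy
  simp only [bernoulliFn, if_pos rfl, if_neg hy']
  have h1 : Real.exp y - 1 ≠ 0 := exm1_ne hy'
  have h2 : y * Real.exp y - y ≠ 0 := by
    have h3 : y * Real.exp y - y = y * (Real.exp y - 1) := by ring
    rw [h3]; exact mul_ne_zero hy' h1
  rw [div_eq_div_iff h2 (show y - (0:ℝ) ≠ 0 by simpa using hy')]
  norm_num
  field_simp [h1]
  ring

lemma deriv_B_eq : deriv bernoulliFn = Bd := by
  funext x
  by_cases hx : x = 0
  · subst hx; rw [hasDerivAt_B0.deriv]; simp [Bd]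
  · rw [(hasDerivAt_B hx).deriv]; simp [Bd, hx]

lemma continuous_B : Continuous bernoulliFn := by
  rw [continuous_iff_continuousAt]; intro x
  by_cases hx : x = 0
  · subst hx; exact hasDerivAt_B0.continuousAt
  · exact (hasDerivAt_B hx).continuousAt

lemma continuousAt_Bd0 : ContinuousAt Bd 0 := by
  have h0 : Bd 0 = -(1/2) := by simp [Bd]
  unfold ContinuousAt
  rw [h0, ← nhdsNE_sup_pure (0:ℝ), tendsto_sup]
  constructor
  · apply limB.congr'
    filter_upwards [self_mem_nhdsWithin] with y hy
    have hy' : y ≠ 0 := hy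
    simp [Bd, hy']
  · have h := tendsto_pure_pure Bd (0:ℝ)
    rw [h0] at h
    exact h.mono_right (pure_le_nhds _)

lemma continuous_Bd : Continuous Bd := by
  rw [continuous_iff_continuousAt]; intro x
  by_cases hx : x = 0
  · subst hx; exact continuousAt_Bd0
  · have hc : ContinuousAt Bphi x := by
      unfold Bphi
      exact ContinuousAt.div (by fun_prop) (by fun_prop) (pow_ne_zero 2 (exm1_ne hx))
    apply hc.congr
    filter_upwards [eventually_ne_nhds hx] with y hy
    simp [Bd, hy]

lemma hasDerivAt_Bd {x : ℝ} (hx : x ≠ 0) : HasDerivAt Bd (Bpsi x) x := by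
  apply (hasDerivAt_Bphi hx).congr_of_eventuallyEq
  filter_upwards [eventually_ne_nhds hx] with y hy
  simp [Bd, hy]

lemma strictMono_Bd : StrictMono Bd := by
  have hIic : StrictMonoOn Bd (Iic 0) := by
    apply strictMonoOn_of_deriv_pos (convex_Iic 0) continuous_Bd.continuousOn
    intro y hy; rw [interior_Iic] at hy
    rw [(hasDerivAt_Bd (ne_of_lt hy)).deriv]; exact Bpsi_pos (ne_of_lt hy)
  have hIci : StrictMonoOn Bd (Ici 0) := by
    apply strictMonoOn_of_deriv_pos (convex_Ici 0) continuous_Bd.continuousOn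
    intro y hy; rw [interior_Ici] at hy
    rw [(hasDerivAt_Bd (ne_of_gt hy)).deriv]; exact Bpsi_pos (ne_of_gt hy)
  intro a b hab
  rcases le_or_gt b 0 with hb | hb
  · exact hIic (le_of_lt (lt_of_lt_of_le hab hb)) hb hab
  · rcases le_or_gt 0 a with ha | ha
    · exact hIci ha (le_of_lt hb) hab
    · exact lt_trans (hIic (le_of_lt ha) self_mem_Iic ha) (hIci self_mem_Ici (le_of_lt hb) hb)

theorem stmt_9 : StrictConvexOn ℝ Set.univ bernoulliFn := by
  apply StrictMono.strictConvexOn_univ_of_deriv continuous_B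
  rw [deriv_B_eq]
  exact strictMono_Bd
end
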